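/- For all real numbers x, y and all real t > s > 0 and all a ≥ 1, one has exp(-a(y-x)²/(2(t-s))) · exp(-(x-z)²/(2s)) ≤ exp(-(y-z)²/(2t)) · exp(-(t/(2s)) · ((x-y)/√(t-s) + √(t-s)·(y-z)/(t-s+s·a))²) for every real z. -/
import Mathlib


theorem gaussian_exponent_ineq_diff
    (x y z s t a : ℝ) (hs : 0 < s) (hst : s < t) (ha : 1 ≤ a) :
    Real.exp (-(a * (y - x) ^ 2) / (2 * (t - s))) * Real.exp (-((x - z) ^ 2) / (2 * s)) ≤
      Real.exp (-((y - z) ^ 2) / (2 * t)) *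
        Real.exp (-(t / (2 * s)) *
          ((x - y) / Real.sqrt (t - s) + Real.sqrt (t - s) * (y - z) / (t - s + s * a)) ^ 2) := by
  have hd : (0:ℝ) < t - s := by linarith
  have ht : (0:ℝ) < t := by linarith
  have hD : (0:ℝ) < t - s + s * a := by nlinarith
  set r := Real.sqrt (t - s) with hrdef
  have hr : r ^ 2 = t - s := Real.sq_sqrt hd.le
  have hrpos : 0 < r := Real.sqrt_pos.2 hd
  rw [← Real.exp_add, ← Real.exp_add, Real.exp_le_exp]
  have h1 : (x - y) / r + r * (y - z) / (t - s + s * a)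
      = ((x - y) * (t - s + s * a) + (t - s) * (y - z)) / (r * (t - s + s * a)) := by
    rw [div_add_div _ _ hrpos.ne' hD.ne']
    congr 1
    linear_combination (y - z) * hr
  have h2 : ((x - y) / r + r * (y - z) / (t - s + s * a)) ^ 2
      = ((x - y) * (t - s + s * a) + (t - s) * (y - z)) ^ 2
        / ((t - s) * (t - s + s * a) ^ 2) := by
    rw [h1, div_pow, mul_pow, hr]
  rw [h2]
  have key : (a * (y - x) ^ 2) / (2 * (t - s)) + (x - z) ^ 2 / (2 * s)
      - ((y - z) ^ 2 / (2 * t) + (t / (2 * s)) *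
        (((x - y) * (t - s + s * a) + (t - s) * (y - z)) ^ 2
          / ((t - s) * (t - s + s * a) ^ 2)))
      = (a - 1) / 2 * (((x - y) * (t - s + s * a) + (t - s) * (y - z)) ^ 2
          / ((t - s) * (t - s + s * a) ^ 2)
        + (t - s) * (y - z) ^ 2 / (t * (t - s + s * a))) := by
    field_simp
    ring
  have hnn : 0 ≤ (a - 1) / 2 * (((x - y) * (t - s + s * a) + (t - s) * (y - z)) ^ 2
          / ((t - s) * (t - s + s * a) ^ 2)
        + (t - s) * (y - z) ^ 2 / (t * (t - s + s * a))) := by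
    apply mul_nonneg (by linarith)
    apply add_nonneg
    · exact div_nonneg (sq_nonneg _) (by positivity)
    · exact div_nonneg (by positivity) (by positivity)
  simp only [neg_div, neg_mul]
  linarith [key, hnn]
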